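/- arXiv:2201.12143 — 7 statements merged into one kernel-verified Lean document; each statement's English description precedes it below -/
import Mathlib

section
/- Let γ > 0 and let a₁, a₂ be real numbers with 0 ≤ a₂ ≤ a₁ and a₂ ≤ γ. Then the pair (s₁, s₂) = (γ, a₂ − γ) is a pure Nash equilibrium of the two-environment scalar explanation game, and s₁ + s₂ = a₂. In words, when the two environments' least-squares targets have the same (nonnegative) sign, there is an equilibrium whose aggregate explanation equals the target of smaller absolute value. -/
/-- The two-environment scalar explanation game: each player `i` chooses `sᵢ ∈ [-γ, γ]`
and incurs cost `uᵢ(s₁, s₂) = (aᵢ - s₁ - s₂)²`. `(s₁, s₂)` is a pure Nash equilibrium if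
neither player can decrease its own cost by a unilateral deviation within `[-γ, γ]`. -/
def IsNashTwoEnv (γ a₁ a₂ s₁ s₂ : ℝ) : Prop :=
  s₁ ∈ Set.Icc (-γ) γ ∧ s₂ ∈ Set.Icc (-γ) γ ∧
  (∀ k ∈ Set.Icc (-γ) γ, (a₁ - s₁ - s₂)^2 ≤ (a₁ - k - s₂)^2) ∧
  (∀ k ∈ Set.Icc (-γ) γ, (a₂ - s₁ - s₂)^2 ≤ (a₂ - s₁ - k)^2)

/-- When the two environments' least-squares targets have the same (nonnegative) sign,
`(γ, a₂ - γ)` is a pure Nash equilibrium of the two-environment scalar explanation game,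
whose aggregate explanation equals the target of smaller absolute value. -/
theorem nash_same_sign (γ a₁ a₂ : ℝ) (hγ : 0 < γ)
    (h0 : 0 ≤ a₂) (h21 : a₂ ≤ a₁) (h2γ : a₂ ≤ γ) :
    IsNashTwoEnv γ a₁ a₂ γ (a₂ - γ) ∧ γ + (a₂ - γ) = a₂ := by
  refine ⟨⟨⟨by linarith, le_refl γ⟩, ⟨by linarith, by linarith⟩, ?_, ?_⟩, by ring⟩
  · intro k hk
    obtain ⟨hk1, hk2⟩ := hk
    nlinarith [sq_nonneg (γ - k), sq_nonneg (a₁ - a₂)]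
  · intro k hk
    have : (a₂ - γ - (a₂ - γ))^2 = 0 := by ring
    rw [this]
    positivity
end

section
/- Let γ > 0 and let a₁, a₂ be real numbers with a₂ ≤ 0 ≤ a₁. Then the pair (s₁, s₂) = (γ, −γ) is a pure Nash equilibrium of the two-environment scalar explanation game, and s₁ + s₂ = 0. In words, when the two environments' least-squares targets have opposite signs, there is an equilibrium whose aggregate explanation is zero. -/
/-- When the two environments' least-squares targets have opposite signs (`a₂ ≤ 0 ≤ a₁`),
`(γ, -γ)` is a pure Nash equilibrium of the two-environment scalar explanation game,
whose aggregate explanation is zero. -/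
theorem nash_opposite_sign (γ a₁ a₂ : ℝ) (hγ : 0 < γ)
    (h2 : a₂ ≤ 0) (h1 : 0 ≤ a₁) :
    IsNashTwoEnv γ a₁ a₂ γ (-γ) ∧ γ + (-γ) = 0 := by
  refine ⟨⟨⟨by linarith, le_refl _⟩, ⟨le_refl _, by linarith⟩, ?_, ?_⟩, by ring⟩
  · intro k ⟨hk1, hk2⟩
    nlinarith [sq_nonneg (γ - k), sq_nonneg (a₁ + γ - k)]
  · intro k ⟨hk1, hk2⟩
    nlinarith [sq_nonneg (γ + k), sq_nonneg (a₂ - γ - k)]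
end

section
/- (Theorem 1, scalar form.) Let γ > 0 and let a₁, a₂ be real numbers with min(|a₁|, |a₂|) ≤ γ. Then the two-environment scalar explanation game has a pure Nash equilibrium (s₁, s₂) whose aggregate strategy satisfies s₁ + s₂ = LINEX(a₁, a₂). -/
/-- `LINEX(a₁, a₂) = (a₁·𝟙[|a₂| ≥ |a₁|] + a₂·𝟙[|a₁| > |a₂|])·𝟙[a₁·a₂ ≥ 0]`:
zero if `a₁·a₂ < 0`, otherwise whichever of `a₁, a₂` has smaller absolute value
(`a₁` in case of a tie). -/
noncomputable def LINEX (a₁ a₂ : ℝ) : ℝ :=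
  ((if |a₂| ≥ |a₁| then a₁ else 0) + (if |a₁| > |a₂| then a₂ else 0)) *
    (if a₁ * a₂ ≥ 0 then 1 else 0)

/-- (Theorem 1, scalar form.) If `min(|a₁|, |a₂|) ≤ γ`, the two-environment scalar
explanation game has a pure Nash equilibrium whose aggregate strategy equals
`LINEX(a₁, a₂)`. -/
theorem nash_linex_scalar (γ a₁ a₂ : ℝ) (hγ : 0 < γ)
    (h : min |a₁| |a₂| ≤ γ) :
    ∃ s₁ s₂ : ℝ, IsNashTwoEnv γ a₁ a₂ s₁ s₂ ∧ s₁ + s₂ = LINEX a₁ a₂ := by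
  rcases le_or_gt 0 a₁ with h1 | h1 <;> rcases le_or_gt 0 a₂ with h2 | h2
  · -- both nonneg
    rcases le_or_gt a₁ a₂ with hle | hlt
    · have ha : a₁ ≤ γ := by
        have : min |a₁| |a₂| = a₁ := by
          rw [abs_of_nonneg h1, abs_of_nonneg h2]; exact min_eq_left hle
        linarith [this ▸ h]
      refine ⟨a₁ - γ, γ, ⟨⟨by linarith, by linarith⟩, ⟨by linarith, le_refl γ⟩,
        fun k ⟨hk1, hk2⟩ => by nlinarith, fun k ⟨hk1, hk2⟩ => by nlinarith⟩, ?_⟩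
      have hl : LINEX a₁ a₂ = a₁ := by
        unfold LINEX
        rw [if_pos (mul_nonneg h1 h2), if_pos (by rw [abs_of_nonneg h1, abs_of_nonneg h2]; exact hle)]
        rw [if_neg (by rw [abs_of_nonneg h1, abs_of_nonneg h2]; exact not_lt.mpr hle)]
        ring
      rw [hl]; ring
    · have ha : a₂ ≤ γ := by
        have : min |a₁| |a₂| = a₂ := by
          rw [abs_of_nonneg h1, abs_of_nonneg h2]; exact min_eq_right hlt.le
        linarith [this ▸ h]
      refine ⟨γ, a₂ - γ, ⟨⟨by linarith, le_refl γ⟩, ⟨by linarith, by linarith⟩,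
        fun k ⟨hk1, hk2⟩ => by nlinarith, fun k ⟨hk1, hk2⟩ => by nlinarith⟩, ?_⟩
      have hl : LINEX a₁ a₂ = a₂ := by
        unfold LINEX
        rw [if_pos (mul_nonneg h1 h2),
          if_neg (by rw [abs_of_nonneg h1, abs_of_nonneg h2]; exact not_le.mpr hlt),
          if_pos (by rw [abs_of_nonneg h1, abs_of_nonneg h2]; exact hlt)]
        ring
      rw [hl]; ring
  · -- a₁ ≥ 0 > a₂
    refine ⟨γ, -γ, ⟨⟨by linarith, le_refl γ⟩, ⟨le_refl (-γ), by linarith⟩,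
      fun k ⟨hk1, hk2⟩ => by nlinarith, fun k ⟨hk1, hk2⟩ => by nlinarith⟩, ?_⟩
    have hl : LINEX a₁ a₂ = 0 := by
      unfold LINEX
      have hp : ¬ (a₁ * a₂ ≥ 0) ∨ a₁ = 0 := by
        rcases eq_or_lt_of_le h1 with rfl | h1' 
        · right; rfl
        · left; intro hc; nlinarith
      split_ifs with hA hB hC <;> rcases hp with hp | hp <;> simp_all <;> nlinarith [abs_nonneg a₂, abs_nonneg a₁, abs_of_neg h2]
    rw [hl]; ring
  · -- a₁ < 0 ≤ a₂
    refine ⟨-γ, γ, ⟨⟨le_refl (-γ), by linarith⟩, ⟨by linarith, le_refl γ⟩,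
      fun k ⟨hk1, hk2⟩ => by nlinarith, fun k ⟨hk1, hk2⟩ => by nlinarith⟩, ?_⟩
    have hl : LINEX a₁ a₂ = 0 := by
      unfold LINEX
      have hp : ¬ (a₁ * a₂ ≥ 0) ∨ a₂ = 0 := by
        rcases eq_or_lt_of_le h2 with rfl | h2'
        · right; rfl
        · left; intro hc; nlinarith
      split_ifs with hA hB hC <;> rcases hp with hp | hp <;> simp_all <;> nlinarith [abs_nonneg a₂, abs_nonneg a₁, abs_of_neg h1]
    rw [hl]; ring
  · -- both neg
    rcases le_or_gt a₂ a₁ with hle | hlt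
    · have ha : -a₁ ≤ γ := by
        have : min |a₁| |a₂| = -a₁ := by
          rw [abs_of_neg h1, abs_of_neg h2]; exact min_eq_left (by linarith)
        linarith [this ▸ h]
      refine ⟨a₁ + γ, -γ, ⟨⟨by linarith, by linarith⟩, ⟨le_refl (-γ), by linarith⟩,
        fun k ⟨hk1, hk2⟩ => by nlinarith, fun k ⟨hk1, hk2⟩ => by nlinarith⟩, ?_⟩
      have hl : LINEX a₁ a₂ = a₁ := by
        unfold LINEX
        rw [if_pos (by nlinarith : a₁ * a₂ ≥ 0),
          if_pos (by rw [abs_of_neg h1, abs_of_neg h2]; linarith),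
          if_neg (by rw [abs_of_neg h1, abs_of_neg h2]; intro hc; linarith)]
        ring
      rw [hl]; ring
    · have ha : -a₂ ≤ γ := by
        have : min |a₁| |a₂| = -a₂ := by
          rw [abs_of_neg h1, abs_of_neg h2]; exact min_eq_right (by linarith)
        linarith [this ▸ h]
      refine ⟨-γ, a₂ + γ, ⟨⟨le_refl (-γ), by linarith⟩, ⟨by linarith, by linarith⟩,
        fun k ⟨hk1, hk2⟩ => by nlinarith, fun k ⟨hk1, hk2⟩ => by nlinarith⟩, ?_⟩
      have hl : LINEX a₁ a₂ = a₂ := by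
        unfold LINEX
        rw [if_pos (by nlinarith : a₁ * a₂ ≥ 0),
          if_neg (by rw [abs_of_neg h1, abs_of_neg h2]; intro hc; linarith),
          if_pos (by rw [abs_of_neg h1, abs_of_neg h2]; linarith)]
        ring
      rw [hl]; ring
end

section
/- Let γ > 0 and let a₁, a₂ be real numbers with 0 < a₂ < a₁ and a₂ ≤ γ. Then the two-environment scalar explanation game has exactly one pure Nash equilibrium, namely (s₁, s₂) = (γ, a₂ − γ); in particular every pure Nash equilibrium satisfies s₁ + s₂ = a₂. -/
/-- If `0 < a₂ < a₁` and `a₂ ≤ γ`, the two-environment scalar explanation game has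
exactly one pure Nash equilibrium, namely `(γ, a₂ - γ)`; in particular every pure Nash
equilibrium satisfies `s₁ + s₂ = a₂`. -/
theorem nash_same_sign_unique (γ a₁ a₂ : ℝ) (hγ : 0 < γ)
    (h0 : 0 < a₂) (h21 : a₂ < a₁) (h2γ : a₂ ≤ γ) :
    (∀ s₁ s₂ : ℝ, IsNashTwoEnv γ a₁ a₂ s₁ s₂ ↔ (s₁ = γ ∧ s₂ = a₂ - γ)) ∧
    (∀ s₁ s₂ : ℝ, IsNashTwoEnv γ a₁ a₂ s₁ s₂ → s₁ + s₂ = a₂) := by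
  have fwd : ∀ s₁ s₂ : ℝ, IsNashTwoEnv γ a₁ a₂ s₁ s₂ → s₁ = γ ∧ s₂ = a₂ - γ := by
    intro s₁ s₂ ⟨⟨hs1l, hs1u⟩, ⟨hs2l, hs2u⟩, h1, h2⟩
    by_cases hc : a₂ - s₁ ≤ γ
    · -- player 2 can hit the target exactly
      have hk : a₂ - s₁ ∈ Set.Icc (-γ) γ := ⟨by linarith, hc⟩
      have h2' := h2 _ hk
      have hsum : s₁ + s₂ = a₂ := by nlinarith [sq_nonneg (a₂ - s₁ - s₂)]
      have hs1γ : s₁ = γ := by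
        by_contra hne
        have hlt : s₁ < γ := lt_of_le_of_ne hs1u hne
        have hkm : min γ (a₁ - s₂) ∈ Set.Icc (-γ) γ := by
          constructor
          · apply le_min <;> linarith
          · exact min_le_left _ _
        have h1' := h1 _ hkm
        have h1lt : s₁ < min γ (a₁ - s₂) := by
          apply lt_min hlt; linarith
        have h2le : min γ (a₁ - s₂) ≤ a₁ - s₂ := min_le_right _ _
        nlinarith
      exact ⟨hs1γ, by linarith⟩
    · -- a₂ - s₁ > γ : player 2 is forced to s₂ = γ, then player 1 contradicts
      push_neg at hc
      have h2' := h2 γ ⟨by linarith, le_refl γ⟩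
      have hs2γ : s₂ = γ := by nlinarith
      have hs1lt : s₁ < a₂ - γ := by linarith
      have hkm : min γ (a₁ - γ) ∈ Set.Icc (-γ) γ := by
        constructor
        · apply le_min <;> linarith
        · exact min_le_left _ _
      have h1' := h1 _ hkm
      have h1lt : s₁ < min γ (a₁ - γ) := by
        apply lt_min <;> linarith
      have h2le : min γ (a₁ - γ) ≤ a₁ - γ := min_le_right _ _
      exfalso
      nlinarith [h1']
  have bwd : IsNashTwoEnv γ a₁ a₂ γ (a₂ - γ) := by
    refine ⟨⟨by linarith, le_refl γ⟩, ⟨by linarith, by linarith⟩, ?_, ?_⟩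
    · intro k ⟨hkl, hku⟩
      nlinarith
    · intro k ⟨hkl, hku⟩
      nlinarith [sq_nonneg (a₂ - γ - k)]
  constructor
  · intro s₁ s₂
    constructor
    · exact fwd s₁ s₂
    · rintro ⟨rfl, rfl⟩; exact bwd
  · intro s₁ s₂ h
    obtain ⟨rfl, rfl⟩ := fwd s₁ s₂ h
    ring
end

section
/- Let γ > 0 and let a₁, a₂ be real numbers with a₂ < 0 < a₁. Then the two-environment scalar explanation game has exactly one pure Nash equilibrium, namely (s₁, s₂) = (γ, −γ); in particular every pure Nash equilibrium satisfies s₁ + s₂ = 0. -/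
private lemma proj_hi {γ c s : ℝ} (hs : s ≤ γ) (hc : γ ≤ c)
    (h : (c - s)^2 ≤ (c - γ)^2) : s = γ := by nlinarith [sq_nonneg (γ - s)]

private lemma proj_lo {γ c s : ℝ} (hs : -γ ≤ s) (hc : c ≤ -γ)
    (h : (c - s)^2 ≤ (c + γ)^2) : s = -γ := by nlinarith [sq_nonneg (s + γ)]

private lemma proj_mid {c s : ℝ} (h : (c - s)^2 ≤ 0) : s = c := by
  nlinarith [sq_nonneg (c - s)]

private lemma nash_forward (γ a₁ a₂ s₁ s₂ : ℝ) (hγ : 0 < γ)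
    (h2 : a₂ < 0) (h1 : 0 < a₁) (h : IsNashTwoEnv γ a₁ a₂ s₁ s₂) :
    s₁ = γ ∧ s₂ = -γ := by
  obtain ⟨⟨hs1l, hs1u⟩, ⟨hs2l, hs2u⟩, H1, H2⟩ := h
  have hγmem : γ ∈ Set.Icc (-γ) γ := ⟨by linarith, le_refl γ⟩
  have hnγmem : -γ ∈ Set.Icc (-γ) γ := ⟨le_refl _, by linarith⟩
  -- c₂ = a₂ - s₁ < γ always
  rcases le_or_gt (a₂ - s₁) (-γ) with hc2 | hc2
  · -- s₂ = -γ, then c₁ = a₁ + γ ≥ γ so s₁ = γ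
    have hs2 : s₂ = -γ := by
      have := H2 (-γ) hnγmem
      exact proj_lo hs2l hc2 (by nlinarith)
    subst hs2
    have hs1 : s₁ = γ := by
      have := H1 γ hγmem
      exact proj_hi (c := a₁ + γ) hs1u (by linarith) (by nlinarith)
    exact ⟨hs1, rfl⟩
  · -- interior case for player 2: s₂ = a₂ - s₁, so s₁ + s₂ = a₂
    have hc2u : a₂ - s₁ < γ := by linarith
    have hmem : a₂ - s₁ ∈ Set.Icc (-γ) γ := ⟨le_of_lt hc2, le_of_lt hc2u⟩
    have hs2 : s₂ = a₂ - s₁ := by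
      have := H2 (a₂ - s₁) hmem
      exact proj_mid (by nlinarith)
    -- player 1: c₁ = a₁ - s₂
    have hc1l : -γ < a₁ - s₂ := by linarith
    rcases le_or_gt γ (a₁ - s₂) with hc1 | hc1
    · -- s₁ = γ, then s₂ = a₂ - γ < -γ, contradiction
      have hs1 : s₁ = γ := by
        have := H1 γ hγmem
        exact proj_hi hs1u hc1 (by nlinarith)
      exfalso; rw [hs1] at hs2; linarith
    · -- s₁ = a₁ - s₂, so s₁ + s₂ = a₁ = a₂, contradiction
      have hmem1 : a₁ - s₂ ∈ Set.Icc (-γ) γ := ⟨le_of_lt hc1l, le_of_lt hc1⟩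
      have hs1 : s₁ = a₁ - s₂ := by
        have := H1 (a₁ - s₂) hmem1
        exact proj_mid (by nlinarith)
      exfalso; linarith

/-- If `a₂ < 0 < a₁`, the two-environment scalar explanation game has exactly one pure
Nash equilibrium, namely `(γ, -γ)`; in particular every pure Nash equilibrium satisfies
`s₁ + s₂ = 0`. -/
theorem nash_opposite_sign_unique (γ a₁ a₂ : ℝ) (hγ : 0 < γ)
    (h2 : a₂ < 0) (h1 : 0 < a₁) :
    (∀ s₁ s₂ : ℝ, IsNashTwoEnv γ a₁ a₂ s₁ s₂ ↔ (s₁ = γ ∧ s₂ = -γ)) ∧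
    (∀ s₁ s₂ : ℝ, IsNashTwoEnv γ a₁ a₂ s₁ s₂ → s₁ + s₂ = 0) := by
  constructor
  · intro s₁ s₂
    constructor
    · exact nash_forward γ a₁ a₂ s₁ s₂ hγ h2 h1
    · rintro ⟨e1, e2⟩
      rw [e1, e2]
      refine ⟨⟨by linarith, le_refl γ⟩, ⟨le_refl _, by linarith⟩, ?_, ?_⟩
      · intro k hk
        have hk1 := hk.1; have hk2 := hk.2
        nlinarith [mul_nonneg (by linarith : (0:ℝ) ≤ γ - k) (by linarith : (0:ℝ) ≤ 2*a₁ - k + γ)]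
      · intro k hk
        have hk1 := hk.1; have hk2 := hk.2
        nlinarith [mul_nonneg (by linarith : (0:ℝ) ≤ γ + k) (by linarith : (0:ℝ) ≤ -2*a₂ + γ + k)]
  · intro s₁ s₂ h
    obtain ⟨e1, e2⟩ := nash_forward γ a₁ a₂ s₁ s₂ hγ h2 h1 h
    rw [e1, e2]; ring
end

section
/- (Odd number of environments.) Let m ≥ 0, k = 2m + 1, γ > 0, and let a₁ ≤ a₂ ≤ … ≤ a_k be real numbers with |a_{m+1}| ≤ γ. Define the profile s by sⱼ = −γ for j ≤ m, s_{m+1} = a_{m+1}, and sⱼ = γ for j ≥ m + 2. Then s is a pure Nash equilibrium of the k-environment scalar explanation game, and Σⱼ sⱼ = a_{m+1}, the median of a₁, …, a_k. -/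
/-- The `k`-environment scalar explanation game: each player `j` chooses `sⱼ ∈ [-γ, γ]`
and incurs cost `uⱼ(s) = (aⱼ - Σᵢ sᵢ)²`. A profile `s` is a pure Nash equilibrium if no
player can strictly decrease its own cost by unilaterally changing its strategy within
`[-γ, γ]`. -/
def IsNashKEnv {k : ℕ} (γ : ℝ) (a s : Fin k → ℝ) : Prop :=
  (∀ j, s j ∈ Set.Icc (-γ) γ) ∧
  ∀ j : Fin k, ∀ x ∈ Set.Icc (-γ) γ,
    (a j - ∑ i, s i)^2 ≤ (a j - ∑ i, Function.update s j x i)^2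

/-- (Odd number of environments.) With `k = 2m + 1` sorted targets `a₀ ≤ … ≤ a_{2m}` whose
median `a m` satisfies `|a m| ≤ γ`, the profile equal to `-γ` below the median player,
`a m` at the median player and `γ` above is a pure Nash equilibrium of the `k`-environment
scalar explanation game, and the aggregate explanation `Σⱼ sⱼ` equals the median `a m`. -/
theorem nash_odd_environments (m : ℕ) (γ : ℝ) (hγ : 0 < γ)
    (a : Fin (2 * m + 1) → ℝ) (hsort : Monotone a)
    (hmed : |a ⟨m, by omega⟩| ≤ γ) :
    IsNashKEnv γ a
      (fun j => if (j : ℕ) < m then -γ else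
        if (j : ℕ) = m then a ⟨m, by omega⟩ else γ) ∧
    (∑ j, (fun j : Fin (2 * m + 1) => if (j : ℕ) < m then -γ else
        if (j : ℕ) = m then a ⟨m, by omega⟩ else γ) j) = a ⟨m, by omega⟩ := by
  set am := a ⟨m, by omega⟩ with ham
  set s : Fin (2 * m + 1) → ℝ := fun j => if (j : ℕ) < m then -γ else
      if (j : ℕ) = m then am else γ with hs
  have habs := abs_le.mp hmed
  -- sum of s equals am
  have hrev : ∀ j : Fin (2 * m + 1), s j + s j.rev = if (j : ℕ) = m then 2 * am else 0 := by
    intro j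
    have hrv : (j.rev : ℕ) = 2 * m - (j : ℕ) := by
      rw [Fin.val_rev]; omega
    have hj := j.isLt
    simp only [hs, hrv]
    split_ifs <;> first | ring1 | (exfalso; omega)
  have hsum : (∑ j, s j) = am := by
    have h1 : (∑ j, s j) + (∑ j, s j) = 2 * am := by
      have h2 : (∑ j : Fin (2*m+1), s j.rev) = ∑ j, s j := Equiv.sum_comp (Equiv.mk Fin.rev Fin.rev
        Fin.rev_rev Fin.rev_rev) s
      calc (∑ j, s j) + (∑ j, s j) = (∑ j, s j) + ∑ j : Fin (2*m+1), s j.rev := by rw [h2]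
        _ = ∑ j : Fin (2*m+1), (s j + s j.rev) := (Finset.sum_add_distrib).symm
        _ = ∑ j : Fin (2*m+1), (if (j : ℕ) = m then 2 * am else 0) :=
            Finset.sum_congr rfl fun j _ => hrev j
        _ = 2 * am := by
            rw [Finset.sum_eq_single (⟨m, by omega⟩ : Fin (2*m+1))]
            · simp
            · intro b _ hb; rw [if_neg (by simpa [Fin.ext_iff] using hb)]
            · intro h; exact absurd (Finset.mem_univ _) h
    linarith
  have hmem : ∀ j, s j ∈ Set.Icc (-γ) γ := by
    intro j
    simp only [hs, Set.mem_Icc]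
    split_ifs with h1 h2
    · constructor <;> linarith
    · exact ⟨habs.1, habs.2⟩
    · constructor <;> linarith
  refine ⟨⟨hmem, ?_⟩, hsum⟩
  intro j x hx
  rw [Set.mem_Icc] at hx
  have hupd : (∑ i, Function.update s j x i) = am - s j + x := by
    rw [Finset.sum_update_of_mem (Finset.mem_univ j)]
    have : ∑ i ∈ Finset.univ \ {j}, s i = (∑ i, s i) - s j := by
      rw [Finset.sdiff_singleton_eq_erase, Finset.sum_erase_eq_sub (Finset.mem_univ j)]
    rw [this, hsum]; ring
  rw [hsum, hupd]
  have hj := j.isLt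
  rcases lt_trichotomy (j : ℕ) m with h | h | h
  · have hsj : s j = -γ := by simp only [hs]; rw [if_pos h]
    have haj : a j ≤ am := hsort (by simp [Fin.le_def]; omega)
    rw [hsj]
    nlinarith [hx.1, hx.2]
  · have haj : a j = am := by
      have : j = ⟨m, by omega⟩ := Fin.ext h
      rw [this]
    rw [haj]
    simp only [sub_self, ne_eq, OfNat.ofNat_ne_zero, not_false_eq_true, zero_pow]
    positivity
  · have hsj : s j = γ := by simp only [hs]; rw [if_neg (by omega), if_neg (by omega)]
    have haj : am ≤ a j := hsort (by simp [Fin.le_def]; omega)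
    rw [hsj]
    nlinarith [hx.1, hx.2]
end

section
/- (Even number of environments.) Let m ≥ 1, k = 2m, γ > 0, and let a₁ ≤ a₂ ≤ … ≤ a_k be real numbers with max(|a_m|, |a_{m+1}|) ≤ γ. Then the k-environment scalar explanation game has a pure Nash equilibrium s with Σⱼ sⱼ = LINEX(a_m, a_{m+1}); that is, the aggregate explanation is zero if the middle two targets a_m, a_{m+1} have strictly opposite signs, and otherwise equals the one of a_m, a_{m+1} with smaller absolute value. -/
lemma linex_facts (α β : ℝ) (hab : α ≤ β) :
    α ≤ LINEX α β ∧ LINEX α β ≤ β ∧ (α = LINEX α β ∨ LINEX α β ≤ 0) ∧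
      (β = LINEX α β ∨ 0 ≤ LINEX α β) ∧ |LINEX α β| ≤ max |α| |β| := by
  have haa := abs_cases α
  have hbb := abs_cases β
  have h1 := le_max_left |α| |β|
  have h2 := le_max_right |α| |β|
  have h3 := abs_nonneg α
  have h4 := abs_nonneg β
  unfold LINEX
  split_ifs with c1 c2 c3 c3 c2 c3 c3 <;>
    simp only [mul_one, mul_zero, add_zero, zero_add]
  · exfalso; linarith
  · exfalso; linarith
  · refine ⟨le_refl _, hab, Or.inl trivial, ?_, by rwa [ge_iff_le] at c1⟩
    rcases le_or_gt 0 α with h | h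
    · exact Or.inr h
    · left
      have hb0 : β ≤ 0 := by nlinarith
      rcases haa with ⟨e1, _⟩ | ⟨e1, _⟩ <;> rcases hbb with ⟨e2, _⟩ | ⟨e2, _⟩ <;> linarith
  · push_neg at c3
    have hα : α < 0 := by nlinarith
    have hβ : 0 < β := by nlinarith
    exact ⟨le_of_lt hα, le_of_lt hβ, Or.inr le_rfl, Or.inr le_rfl, by simpa using le_trans h3 h1⟩
  · refine ⟨hab, le_refl _, ?_, Or.inl trivial, h2⟩
    rcases le_or_gt β 0 with h | h
    · exact Or.inr h
    · exfalso
      have hα : 0 ≤ α := by nlinarith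
      rcases haa with ⟨e1, _⟩ | ⟨e1, _⟩ <;> rcases hbb with ⟨e2, _⟩ | ⟨e2, _⟩ <;> linarith
  · push_neg at c3
    have hα : α < 0 := by nlinarith
    have hβ : 0 < β := by nlinarith
    exact ⟨le_of_lt hα, le_of_lt hβ, Or.inr le_rfl, Or.inr le_rfl, by simpa using le_trans h3 h1⟩
  · exfalso; linarith
  · exfalso; linarith

set_option maxHeartbeats 1000000 in
/-- (Even number of environments.) With `k = 2m` (`m ≥ 1`) sorted targets whose middle two
entries (indices `m - 1` and `m`, zero-based) have absolute value at most `γ`, the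
`k`-environment scalar explanation game has a pure Nash equilibrium whose aggregate
explanation equals `LINEX` of the middle two targets: zero if they have strictly opposite
signs, and otherwise the one of smaller absolute value. -/
theorem nash_even_environments (m : ℕ) (hm : 1 ≤ m) (γ : ℝ) (hγ : 0 < γ)
    (a : Fin (2 * m) → ℝ) (hsort : Monotone a)
    (hmid : max |a ⟨m - 1, by omega⟩| |a ⟨m, by omega⟩| ≤ γ) :
    ∃ s : Fin (2 * m) → ℝ, IsNashKEnv γ a s ∧
      (∑ j, s j) = LINEX (a ⟨m - 1, by omega⟩) (a ⟨m, by omega⟩) := by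
  obtain ⟨n, rfl⟩ : ∃ n, m = n + 1 := ⟨m - 1, by omega⟩
  have h1 : (n : ℕ) < 2 * (n + 1) := by omega
  have h2 : (n + 1 : ℕ) < 2 * (n + 1) := by omega
  show ∃ s : Fin (2 * (n + 1)) → ℝ, IsNashKEnv γ a s ∧
    (∑ j, s j) = LINEX (a ⟨n, h1⟩) (a ⟨n + 1, h2⟩)
  set α := a ⟨n, h1⟩ with hαdef
  set β := a ⟨n + 1, h2⟩ with hβdef
  have hmid' : max |α| |β| ≤ γ := hmid
  have hab : α ≤ β := hsort (by simp [Fin.le_def])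
  set T := LINEX α β with hTdef
  obtain ⟨f1, f2, f3, f4, f5⟩ := linex_facts α β hab
  have hTγ : |T| ≤ γ := le_trans f5 hmid'
  rw [abs_le] at hTγ
  set p := max (T - γ) (-γ) with hp
  set q := T - p with hq
  have hp1 : -γ ≤ p := le_max_right _ _
  have hp2 : p ≤ γ := max_le (by linarith [hTγ.2]) (by linarith)
  have hpT : p ≤ T + γ := max_le (by linarith) (by linarith [hTγ.1])
  have hq1 : -γ ≤ q := by rw [hq]; linarith
  have hq2 : q ≤ γ := by rw [hq]; linarith [le_max_left (T - γ) (-γ)]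
  set f : ℕ → ℝ := fun j => if j + 1 < n + 1 then -γ else if j = n then p
    else if j = n + 1 then q else γ with hf
  clear_value f
  rw [← hTdef] at f1 f2 f3 f4 f5
  clear_value T p q
  have hfn : f n = p := by
    simp only [hf]; rw [if_neg (by omega)]; simp
  have hfn1 : f (n + 1) = q := by
    simp only [hf]; rw [if_neg (by omega), if_neg (by omega)]; simp
  have hsum : ∑ j : Fin (2 * (n + 1)), f j.val = T := by
    rw [Fin.sum_univ_eq_sum_range f (2 * (n + 1)), Finset.range_eq_Ico,
      ← Finset.sum_Ico_consecutive f (Nat.zero_le n) (by omega : n ≤ 2 * (n + 1)),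
      ← Finset.sum_Ico_consecutive f (by omega : n ≤ n + 2) (by omega : n + 2 ≤ 2 * (n + 1)),
      Finset.sum_Ico_succ_top (by omega : n ≤ n + 1),
      Finset.sum_Ico_succ_top (le_refl n), Finset.Ico_self, Finset.sum_empty]
    have eA : ∀ j ∈ Finset.Ico 0 n, f j = -γ := by
      intro j hj
      simp only [Finset.mem_Ico] at hj
      simp only [hf]; rw [if_pos (by omega)]
    have eC : ∀ j ∈ Finset.Ico (n + 2) (2 * (n + 1)), f j = γ := by
      intro j hj
      simp only [Finset.mem_Ico] at hj
      simp only [hf]; rw [if_neg (by omega), if_neg (by omega), if_neg (by omega)]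
    rw [Finset.sum_congr rfl eA, Finset.sum_congr rfl eC, Finset.sum_const,
      Finset.sum_const, Nat.card_Ico, Nat.card_Ico, hfn, hfn1]
    have : 2 * (n + 1) - (n + 2) = n := by omega
    rw [this, Nat.sub_zero]
    simp only [nsmul_eq_mul, hq]
    ring
  refine ⟨fun j => f j.val, ⟨?_, ?_⟩, hsum⟩
  · -- bounds
    intro j
    simp only [hf, Set.mem_Icc]
    split_ifs <;> constructor <;> linarith
  · -- Nash
    intro j x hx
    obtain ⟨hx1, hx2⟩ := hx
    have hupd : ∑ i, Function.update (fun j : Fin (2 * (n + 1)) => f j.val) j x i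
        = x + (T - f j.val) := by
      rw [Finset.sum_update_of_mem (Finset.mem_univ j),
        Finset.sum_sdiff_eq_sub (Finset.subset_univ {j}), Finset.sum_singleton]
      rw [show ∑ i, (fun j : Fin (2 * (n + 1)) => f j.val) i = T from hsum]
    rw [show ∑ i, (fun j : Fin (2 * (n + 1)) => f j.val) i = T from hsum, hupd]
    rcases lt_or_ge (j.val + 1) (n + 1) with hc | hc
    · have hsj : f j.val = -γ := by simp only [hf]; rw [if_pos hc]
      have haj : a j ≤ α := hsort (show j ≤ ⟨n, h1⟩ by rw [Fin.le_def]; simp; omega)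
      have haT : a j ≤ T := le_trans haj f1
      rw [hsj]
      nlinarith [mul_nonneg (show (0:ℝ) ≤ γ + x by linarith)
        (show (0:ℝ) ≤ (γ + x) + 2 * (T - a j) by linarith)]
    · by_cases hcn : j.val = n
      · have hsj : f j.val = p := by simp only [hf]; rw [if_neg (by omega), if_pos hcn]
        have hja : a j = α := by rw [hαdef]; congr 1; exact Fin.ext hcn
        rcases f3 with hT0 | hT0
        · rw [hja, hT0]
          simpa using sq_nonneg _
        · have hpval : p = -γ := by rw [hp]; exact max_eq_right (by linarith)
          have haT : a j ≤ T := by rw [hja]; exact f1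
          rw [hsj, hpval]
          nlinarith [mul_nonneg (show (0:ℝ) ≤ γ + x by linarith)
            (show (0:ℝ) ≤ (γ + x) + 2 * (T - a j) by linarith)]
      · by_cases hcn1 : j.val = n + 1
        · have hja : a j = β := by rw [hβdef]; congr 1; exact Fin.ext hcn1
          rcases f4 with hT0 | hT0
          · rw [hja, hT0]
            simpa using sq_nonneg _
          · have hpval : p = T - γ := by rw [hp]; exact max_eq_left (by linarith)
            have hsj : f j.val = γ := by
              simp only [hf]; rw [if_neg (by omega), if_neg hcn, if_pos hcn1, hq, hpval]; ring
            have haT : T ≤ a j := by rw [hja]; exact f2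
            rw [hsj]
            nlinarith [mul_nonneg (show (0:ℝ) ≤ γ - x by linarith)
              (show (0:ℝ) ≤ (γ - x) + 2 * (a j - T) by linarith)]
        · have hsj : f j.val = γ := by
            simp only [hf]; rw [if_neg (by omega), if_neg hcn, if_neg hcn1]
          have haj : β ≤ a j := hsort (show (⟨n + 1, h2⟩ : Fin (2 * (n + 1))) ≤ j by
            rw [Fin.le_def]; simp; omega)
          have haT : T ≤ a j := le_trans f2 haj
          rw [hsj]
          nlinarith [mul_nonneg (show (0:ℝ) ≤ γ - x by linarith)
            (show (0:ℝ) ≤ (γ - x) + 2 * (a j - T) by linarith)]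
end
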